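/- arXiv:2002.00820 — 4 statements merged into one kernel-verified Lean document; each statement's English description precedes it below -/
import Mathlib

section
/- For 0 < p < 1 and 0 < s < 1, set q = log((1-s)/s) / log((1-p)/p) (assuming p ≠ 1/2), and let τ(q) = log₂(p^q + (1-p)^q) and H(s) = -s log₂ s - (1-s) log₂(1-s). Then τ'(q) = s log₂ p + (1-s) log₂(1-p) and τ(q) - q·τ'(q) = H(s). -/
/-- For `p ∈ (0,1) \ {1/2}` and `s ∈ (0,1)`, with `q = log((1-s)/s)/log((1-p)/p)`,
the derivative formula `τ'(q) = s log₂ p + (1-s) log₂(1-p)` holds and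
`τ(q) - q·τ'(q) = H(s)`, the binary entropy. -/
theorem tau_legendre_entropy (p s : ℝ) (hp0 : 0 < p) (hp1 : p < 1) (hp : p ≠ 1 / 2)
    (hs0 : 0 < s) (hs1 : s < 1) :
    let q : ℝ := Real.log ((1 - s) / s) / Real.log ((1 - p) / p)
    let τ : ℝ → ℝ := fun x => Real.logb 2 (p ^ x + (1 - p) ^ x)
    let τ' : ℝ := (p ^ q * Real.logb 2 p + (1 - p) ^ q * Real.logb 2 (1 - p)) /
      (p ^ q + (1 - p) ^ q)
    τ' = s * Real.logb 2 p + (1 - s) * Real.logb 2 (1 - p) ∧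
      τ q - q * τ' = -s * Real.logb 2 s - (1 - s) * Real.logb 2 (1 - s) := by
  intro q τ τ'
  have hqdef : q = Real.log ((1 - s) / s) / Real.log ((1 - p) / p) := rfl
  have hτdef : ∀ x, τ x = Real.logb 2 (p ^ x + (1 - p) ^ x) := fun _ => rfl
  have hτ'def : τ' = (p ^ q * Real.logb 2 p + (1 - p) ^ q * Real.logb 2 (1 - p)) /
      (p ^ q + (1 - p) ^ q) := rfl
  clear_value q τ τ'
  have hp1' : 0 < 1 - p := by linarith
  have hs1' : 0 < 1 - s := by linarith
  have hpp : (0:ℝ) < (1 - p) / p := div_pos hp1' hp0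
  have hss : (0:ℝ) < (1 - s) / s := div_pos hs1' hs0
  have hL : Real.log ((1 - p) / p) ≠ 0 := by
    intro h
    rcases Real.log_eq_zero.mp h with h1 | h1 | h1
    · linarith
    · rw [div_eq_one_iff_eq (ne_of_gt hp0)] at h1
      apply hp; linarith
    · linarith
  have hq : q * Real.log ((1 - p) / p) = Real.log ((1 - s) / s) := by
    rw [hqdef]; exact div_mul_cancel₀ _ hL
  set A := p ^ q with hAdef
  set B := (1 - p) ^ q with hBdef
  have hA : 0 < A := Real.rpow_pos_of_pos hp0 q
  have hB : 0 < B := Real.rpow_pos_of_pos hp1' q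
  have hAB : 0 < A + B := by linarith
  have hBA : B / A = (1 - s) / s := by
    rw [hAdef, hBdef, ← Real.div_rpow (le_of_lt hp1') (le_of_lt hp0),
      Real.rpow_def_of_pos hpp, mul_comm, hq, Real.exp_log hss]
  have hkey : (1 - s) * A = s * B := by
    have := (div_eq_div_iff (ne_of_gt hA) (ne_of_gt hs0)).mp hBA
    linarith [this]
  have hAs : A = s * (A + B) := by linear_combination hkey
  have hBs : B = (1 - s) * (A + B) := by linear_combination -hkey
  have h2 : Real.log 2 ≠ 0 := ne_of_gt (Real.log_pos (by norm_num))
  have hτ' : τ' = s * Real.logb 2 p + (1 - s) * Real.logb 2 (1 - p) := by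
    rw [hτ'def]
    have hnum : A * Real.logb 2 p + B * Real.logb 2 (1 - p)
        = (s * Real.logb 2 p + (1 - s) * Real.logb 2 (1 - p)) * (A + B) := by
      linear_combination Real.logb 2 p * hAs + Real.logb 2 (1 - p) * hBs
    rw [hnum, mul_div_cancel_right₀ _ (ne_of_gt hAB)]
  refine ⟨hτ', ?_⟩
  rw [hτ']
  rw [hτdef]
  have hABeq : A + B = A / s := by
    rw [eq_div_iff (ne_of_gt hs0)]; linarith [hAs]
  have hlogA : Real.log A = q * Real.log p := Real.log_rpow hp0 q
  have hq' : q * (Real.log (1 - p) - Real.log p) = Real.log (1 - s) - Real.log s := by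
    rw [← Real.log_div (ne_of_gt hs1') (ne_of_gt hs0), ← hq,
      Real.log_div (ne_of_gt hp1') (ne_of_gt hp0)]
  rw [hABeq, Real.logb, Real.log_div (ne_of_gt hA) (ne_of_gt hs0), hlogA]
  simp only [Real.logb]
  field_simp
  linear_combination (s - 1) * hq'
end

section
/- Define t₁ = 1, t₂ = 3, t_{k+1} = 2 t_k for k ≥ 3, and let N_k be the number of integers i ≤ k such that for some j, t_{2j} ≤ i < t_{2j+1} (with the convention matching the construction: i belongs to an 'a-block'). Then liminf_{k→∞} N_k/k = 1/3 and limsup_{k→∞} N_k/k = 2/3. -/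
open Filter

/-- The sequence `t₁ = 1, t₂ = 3, t₃ = 6, t_{k+1} = 2 t_k` for `k ≥ 3`. -/
def tSeq : ℕ → ℕ
  | 0 => 0
  | 1 => 1
  | 2 => 3
  | (k + 3) => 6 * 2 ^ k

/-- `N_k` counts the integers `i ∈ {1,…,k}` lying in the initial block `{1,2}` or in an
`a`-block `[t_{2j}, t_{2j+1})`. -/
def NSeq (k : ℕ) : ℕ :=
  ((Finset.Icc 1 k).filter
    (fun i => i ≤ 2 ∨ ∃ j ≤ i, 1 ≤ j ∧ tSeq (2 * j) ≤ i ∧ i < tSeq (2 * j + 1))).card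

namespace BlockFreq

open Finset

open scoped Classical

/-- The simplified block predicate. -/
def Q (i : ℕ) : Prop := i ≤ 5 ∨ ∃ m, 1 ≤ m ∧ 3 * 4 ^ m ≤ i ∧ i < 6 * 4 ^ m

lemma tSeq_two_mul (n : ℕ) :
    tSeq (2 * (n + 2)) = 3 * 4 ^ (n + 1) ∧ tSeq (2 * (n + 2) + 1) = 6 * 4 ^ (n + 1) := by
  have h1 : 2 * (n + 2) = (2 * n + 1) + 3 := by ring
  have h2 : 2 * (n + 2) + 1 = (2 * n + 2) + 3 := by ring
  rw [h2, h1]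
  constructor
  · show 6 * 2 ^ (2 * n + 1) = 3 * 4 ^ (n + 1)
    rw [show (4:ℕ) = 2 ^ 2 from rfl, ← pow_mul]
    ring
  · show 6 * 2 ^ (2 * n + 2) = 6 * 4 ^ (n + 1)
    rw [show (4:ℕ) = 2 ^ 2 from rfl, ← pow_mul]
    congr 2

lemma mem_iff (i : ℕ) (hi : 1 ≤ i) :
    (i ≤ 2 ∨ ∃ j ≤ i, 1 ≤ j ∧ tSeq (2 * j) ≤ i ∧ i < tSeq (2 * j + 1)) ↔ Q i := by
  constructor
  · rintro (h | ⟨j, hji, hj1, h1, h2⟩)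
    · exact Or.inl (by omega)
    · match j, hj1 with
      | 1, _ =>
        left
        simp only [show 2 * 1 = 2 from rfl, tSeq] at h1 h2
        omega
      | (n+2), _ =>
        right
        obtain ⟨e1, e2⟩ := tSeq_two_mul n
        exact ⟨n + 1, by omega, by rw [← e1]; exact h1, by rw [← e2]; exact h2⟩
  · rintro (h | ⟨m, hm1, h1, h2⟩)
    · by_cases h2 : i ≤ 2
      · exact Or.inl h2
      · right
        refine ⟨1, hi, le_refl 1, ?_, ?_⟩
        · show tSeq 2 ≤ i; simp only [tSeq]; omega
        · show i < tSeq 3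
          have : tSeq 3 = 6 := rfl
          omega
    · obtain ⟨n, rfl⟩ : ∃ n, m = n + 1 := ⟨m - 1, by omega⟩
      right
      obtain ⟨e1, e2⟩ := tSeq_two_mul n
      have hp1 : n < 2 ^ n := Nat.lt_two_pow_self (n := n)
      have hp2 : (2:ℕ) ^ n ≤ 4 ^ (n + 1) := by
        calc (2:ℕ) ^ n ≤ 4 ^ n := Nat.pow_le_pow_left (by norm_num) n
        _ ≤ 4 ^ (n + 1) := Nat.pow_le_pow_right (by norm_num) (by omega)
      exact ⟨n + 2, by omega, by omega, by rw [e1]; exact h1, by rw [e2]; exact h2⟩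

lemma NSeq_eq (k : ℕ) : NSeq k = ((Finset.Icc 1 k).filter Q).card := by
  unfold NSeq
  congr 1
  apply Finset.filter_congr
  intro i hi
  simp only [Finset.mem_Icc] at hi
  exact mem_iff i hi.1

/-- The union of the initial block and the first `m` `a`-blocks. -/
noncomputable def S (m : ℕ) : Finset ℕ :=
  Finset.Icc 1 5 ∪ (Finset.Icc 1 m).biUnion fun t => Finset.Ico (3 * 4 ^ t) (6 * 4 ^ t)

lemma mem_S {m x : ℕ} :
    x ∈ S m ↔ (1 ≤ x ∧ x ≤ 5) ∨ ∃ t, 1 ≤ t ∧ t ≤ m ∧ 3 * 4 ^ t ≤ x ∧ x < 6 * 4 ^ t := by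
  simp only [S, Finset.mem_union, Finset.mem_biUnion, Finset.mem_Icc, Finset.mem_Ico]
  constructor
  · rintro (h | ⟨t, ht, h⟩)
    · exact Or.inl h
    · exact Or.inr ⟨t, ht.1, ht.2, h.1, h.2⟩
  · rintro (h | ⟨t, h1, h2, h3, h4⟩)
    · exact Or.inl h
    · exact Or.inr ⟨t, ⟨h1, h2⟩, h3, h4⟩

lemma S_lt {m x : ℕ} (hx : x ∈ S m) : x < 6 * 4 ^ m := by
  rcases mem_S.1 hx with h | ⟨t, _, htm, _, h6⟩
  · have : (1:ℕ) ≤ 4 ^ m := Nat.one_le_pow _ _ (by norm_num)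
    omega
  · have : (6:ℕ) * 4 ^ t ≤ 6 * 4 ^ m :=
      Nat.mul_le_mul_left _ (Nat.pow_le_pow_right (by norm_num) htm)
    omega

lemma S_pos {m x : ℕ} (hx : x ∈ S m) : 1 ≤ x := by
  rcases mem_S.1 hx with h | ⟨t, _, _, h3, _⟩
  · omega
  · have : (1:ℕ) ≤ 4 ^ t := Nat.one_le_pow _ _ (by norm_num)
    omega

lemma card_S (m : ℕ) : (S m).card = 4 ^ (m + 1) + 1 := by
  induction m with
  | zero => simp [S]
  | succ n ih =>
    have hstep : S (n + 1) = S n ∪ Finset.Ico (3 * 4 ^ (n + 1)) (6 * 4 ^ (n + 1)) := by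
      ext x
      simp only [mem_S, Finset.mem_union, Finset.mem_Ico]
      constructor
      · rintro (h | ⟨t, h1, h2, h3, h4⟩)
        · exact Or.inl (Or.inl h)
        · by_cases ht : t ≤ n
          · exact Or.inl (Or.inr ⟨t, h1, ht, h3, h4⟩)
          · have : t = n + 1 := by omega
            subst this
            exact Or.inr ⟨h3, h4⟩
      · rintro ((h | ⟨t, h1, h2, h3, h4⟩) | ⟨h3, h4⟩)
        · exact Or.inl h
        · exact Or.inr ⟨t, h1, by omega, h3, h4⟩
        · exact Or.inr ⟨n + 1, by omega, le_refl _, h3, h4⟩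
    have hdisj : Disjoint (S n) (Finset.Ico (3 * 4 ^ (n + 1)) (6 * 4 ^ (n + 1))) := by
      rw [Finset.disjoint_left]
      intro x hx hx2
      have h1 := S_lt hx
      simp only [Finset.mem_Ico] at hx2
      have e : (4:ℕ) ^ (n + 1) = 4 * 4 ^ n := by ring
      omega
    rw [hstep, Finset.card_union_of_disjoint hdisj, ih, Nat.card_Ico]
    have e : (4:ℕ) ^ (n + 2) = 4 * 4 ^ (n + 1) := by ring
    have e2 : (4:ℕ) ^ (n + 1) = 4 * 4 ^ n := by ring
    omega

lemma filter_eq_b {m k : ℕ} (h1 : 6 * 4 ^ m ≤ k + 1) (h2 : k < 3 * 4 ^ (m + 1)) :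
    (Finset.Icc 1 k).filter Q = S m := by
  have hpm : (1:ℕ) ≤ 4 ^ m := Nat.one_le_pow _ _ (by norm_num)
  ext x
  simp only [Finset.mem_filter, Finset.mem_Icc, mem_S, Q]
  constructor
  · rintro ⟨⟨hx1, hxk⟩, (h5 | ⟨t, ht1, h3, h6⟩)⟩
    · exact Or.inl ⟨hx1, h5⟩
    · right
      refine ⟨t, ht1, ?_, h3, h6⟩
      by_contra hc
      push_neg at hc
      have : 3 * 4 ^ (m + 1) ≤ 3 * 4 ^ t :=
        Nat.mul_le_mul_left _ (Nat.pow_le_pow_right (by norm_num) (by omega))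
      omega
  · rintro (⟨hx1, h5⟩ | ⟨t, ht1, htm, h3, h6⟩)
    · exact ⟨⟨hx1, by omega⟩, Or.inl h5⟩
    · have hle : (6:ℕ) * 4 ^ t ≤ 6 * 4 ^ m :=
        Nat.mul_le_mul_left _ (Nat.pow_le_pow_right (by norm_num) htm)
      have hxp : (1:ℕ) ≤ 4 ^ t := Nat.one_le_pow _ _ (by norm_num)
      exact ⟨⟨by omega, by omega⟩, Or.inr ⟨t, ht1, h3, h6⟩⟩

lemma NSeq_b {m k : ℕ} (h1 : 6 * 4 ^ m ≤ k + 1) (h2 : k < 3 * 4 ^ (m + 1)) :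
    NSeq k = 4 ^ (m + 1) + 1 := by
  rw [NSeq_eq, filter_eq_b h1 h2, card_S]

lemma filter_eq_a {n k : ℕ} (h1 : 3 * 4 ^ (n + 1) ≤ k) (h2 : k < 6 * 4 ^ (n + 1)) :
    (Finset.Icc 1 k).filter Q = S n ∪ Finset.Ico (3 * 4 ^ (n + 1)) (k + 1) := by
  have e : (3:ℕ) * 4 ^ (n + 1) = 12 * 4 ^ n := by ring
  have hpn : (1:ℕ) ≤ 4 ^ n := Nat.one_le_pow _ _ (by norm_num)
  ext x
  simp only [Finset.mem_filter, Finset.mem_Icc, Finset.mem_union, mem_S, Finset.mem_Ico, Q]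
  constructor
  · rintro ⟨⟨hx1, hxk⟩, (h5 | ⟨t, ht1, h3, h6⟩)⟩
    · exact Or.inl (Or.inl ⟨hx1, h5⟩)
    · by_cases htn : t ≤ n
      · exact Or.inl (Or.inr ⟨t, ht1, htn, h3, h6⟩)
      · have : 3 * 4 ^ (n + 1) ≤ 3 * 4 ^ t :=
          Nat.mul_le_mul_left _ (Nat.pow_le_pow_right (by norm_num) (by omega))
        exact Or.inr ⟨by omega, by omega⟩
  · rintro ((⟨hx1, h5⟩ | ⟨t, ht1, htn, h3, h6⟩) | ⟨h3, h6⟩)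
    · exact ⟨⟨hx1, by omega⟩, Or.inl h5⟩
    · have hle : (6:ℕ) * 4 ^ t ≤ 6 * 4 ^ n :=
        Nat.mul_le_mul_left _ (Nat.pow_le_pow_right (by norm_num) htn)
      have hxp : (1:ℕ) ≤ 4 ^ t := Nat.one_le_pow _ _ (by norm_num)
      exact ⟨⟨by omega, by omega⟩, Or.inr ⟨t, ht1, h3, h6⟩⟩
    · exact ⟨⟨by omega, by omega⟩, Or.inr ⟨n + 1, by omega, h3, by omega⟩⟩

lemma NSeq_a {n k : ℕ} (h1 : 3 * 4 ^ (n + 1) ≤ k) (h2 : k < 6 * 4 ^ (n + 1)) :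
    NSeq k + 2 * 4 ^ (n + 1) = k + 2 := by
  have e : (3:ℕ) * 4 ^ (n + 1) = 12 * 4 ^ n := by ring
  have hdisj : Disjoint (S n) (Finset.Ico (3 * 4 ^ (n + 1)) (k + 1)) := by
    rw [Finset.disjoint_left]
    intro x hx hx2
    have hl := S_lt hx
    simp only [Finset.mem_Ico] at hx2
    omega
  rw [NSeq_eq, filter_eq_a h1 h2, Finset.card_union_of_disjoint hdisj, card_S, Nat.card_Ico]
  omega

lemma NSeq_small {k : ℕ} (h : k ≤ 5) : NSeq k = k := by
  rw [NSeq_eq, Finset.filter_true_of_mem, Nat.card_Icc]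
  · omega
  · intro i hi
    simp only [Finset.mem_Icc] at hi
    exact Or.inl (by omega)

lemma coverage (k : ℕ) (hk : 6 ≤ k) :
    ∃ m, (6 * 4 ^ m ≤ k ∧ k < 3 * 4 ^ (m + 1)) ∨
      (3 * 4 ^ (m + 1) ≤ k ∧ k < 6 * 4 ^ (m + 1)) := by
  induction k, hk using Nat.le_induction with
  | base => exact ⟨0, Or.inl (by norm_num)⟩
  | succ k hk ih =>
    obtain ⟨m, hm | hm⟩ := ih
    · by_cases h : k + 1 < 3 * 4 ^ (m + 1)
      · exact ⟨m, Or.inl ⟨by omega, h⟩⟩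
      · refine ⟨m, Or.inr ⟨by omega, ?_⟩⟩
        have e : (4:ℕ) ^ (m + 1) = 4 * 4 ^ m := by ring
        have hpm : (1:ℕ) ≤ 4 ^ m := Nat.one_le_pow _ _ (by norm_num)
        omega
    · by_cases h : k + 1 < 6 * 4 ^ (m + 1)
      · exact ⟨m, Or.inr ⟨by omega, h⟩⟩
      · refine ⟨m + 1, Or.inl ⟨by omega, ?_⟩⟩
        have e : (4:ℕ) ^ (m + 2) = 4 * 4 ^ (m + 1) := by ring
        have hpm : (1:ℕ) ≤ 4 ^ (m + 1) := Nat.one_le_pow _ _ (by norm_num)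
        omega

lemma NSeq_bounds (k : ℕ) : k ≤ 3 * NSeq k ∧ 3 * NSeq k ≤ 2 * k + 5 := by
  by_cases h : k ≤ 5
  · rw [NSeq_small h]; omega
  · obtain ⟨m, hm | hm⟩ := coverage k (by omega)
    · have hN := NSeq_b (m := m) (by omega) hm.2
      have e : (4:ℕ) ^ (m + 1) = 4 * 4 ^ m := by ring
      omega
    · have hN := NSeq_a hm.1 hm.2
      omega

lemma NSeq_le (k : ℕ) : NSeq k ≤ k := by
  have h := Finset.card_filter_le (Finset.Icc 1 k)
    (fun i => i ≤ 2 ∨ ∃ j ≤ i, 1 ≤ j ∧ tSeq (2 * j) ≤ i ∧ i < tSeq (2 * j + 1))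
  have h2 : (Finset.Icc 1 k).card = k := by rw [Nat.card_Icc]; omega
  unfold NSeq
  omega

lemma four_pow_ge (m : ℕ) : m ≤ 4 ^ m := by
  have h1 : m < 2 ^ m := Nat.lt_two_pow_self (n := m)
  have h2 : (2:ℕ) ^ m ≤ 4 ^ m := Nat.pow_le_pow_left (by norm_num) m
  omega

end BlockFreq

section MainProof

open BlockFreq

private noncomputable def fBF : ℕ → ℝ := fun k : ℕ => (NSeq k : ℝ) / k

private lemma hf0 : ∀ k, 0 ≤ fBF k := fun k => by unfold fBF; positivity

private lemma hf1 : ∀ k, fBF k ≤ 1 := by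
  intro k
  rcases Nat.eq_zero_or_pos k with rfl | hk
  · simp [fBF]
  · unfold fBF
    apply div_le_one_of_le₀
    · exact_mod_cast BlockFreq.NSeq_le k
    · positivity

private lemma hval1 (m : ℕ) :
    fBF (6 * 4 ^ m - 1) = (4 * (4:ℝ) ^ m + 1) / (6 * (4:ℝ) ^ m - 1) := by
  have hp : (1:ℕ) ≤ 4 ^ m := Nat.one_le_pow _ _ (by norm_num)
  have e : (4:ℕ) ^ (m + 1) = 4 * 4 ^ m := by ring
  have hN : NSeq (6 * 4 ^ m - 1) = 4 ^ (m + 1) + 1 :=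
    BlockFreq.NSeq_b (m := m) (by omega) (by omega)
  unfold fBF
  rw [hN]
  rw [Nat.cast_sub (by omega : 1 ≤ 6 * 4 ^ m)]
  push_cast [pow_succ]
  ring_nf

private lemma hval2 (m : ℕ) :
    fBF (3 * 4 ^ (m + 1) - 1) = ((4:ℝ) ^ (m + 1) + 1) / (3 * (4:ℝ) ^ (m + 1) - 1) := by
  have hp : (1:ℕ) ≤ 4 ^ m := Nat.one_le_pow _ _ (by norm_num)
  have e : (4:ℕ) ^ (m + 1) = 4 * 4 ^ m := by ring
  have hN : NSeq (3 * 4 ^ (m + 1) - 1) = 4 ^ (m + 1) + 1 :=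
    BlockFreq.NSeq_b (m := m) (by omega) (by omega)
  unfold fBF
  rw [hN]
  rw [Nat.cast_sub (by omega : 1 ≤ 3 * 4 ^ (m + 1))]
  push_cast
  ring_nf

private lemma htends2 :
    Filter.Tendsto (fun m : ℕ => fBF (3 * 4 ^ (m + 1) - 1)) atTop (nhds (1/3)) := by
  have hr : Filter.Tendsto (fun m : ℕ => ((1:ℝ)/4) ^ (m + 1)) atTop (nhds 0) := by
    have h0 : Filter.Tendsto (fun m : ℕ => ((1:ℝ)/4) ^ m) atTop (nhds 0) :=
      tendsto_pow_atTop_nhds_zero_of_lt_one (by norm_num) (by norm_num)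
    have := h0.mul_const ((1:ℝ)/4)
    simpa [pow_succ] using this
  have heq : ∀ m : ℕ, fBF (3 * 4 ^ (m + 1) - 1)
      = (1 + ((1:ℝ)/4) ^ (m + 1)) / (3 - ((1:ℝ)/4) ^ (m + 1)) := by
    intro m
    rw [hval2 m]
    have hc1 : (1:ℝ) ≤ (4:ℝ) ^ (m + 1) := one_le_pow₀ (by norm_num)
    have hs : ((1:ℝ)/4) ^ (m + 1) = ((4:ℝ) ^ (m + 1))⁻¹ := by
      rw [div_pow, one_pow, one_div]
    have hsle : ((1:ℝ)/4) ^ (m + 1) ≤ 1 := by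
      rw [hs]
      exact inv_le_one_of_one_le₀ hc1
    rw [div_eq_div_iff (by linarith) (by linarith), hs]
    field_simp
  rw [funext heq]
  have hnum : Filter.Tendsto (fun m : ℕ => 1 + ((1:ℝ)/4) ^ (m + 1)) atTop (nhds (1 + 0)) :=
    tendsto_const_nhds.add hr
  have hden : Filter.Tendsto (fun m : ℕ => 3 - ((1:ℝ)/4) ^ (m + 1)) atTop (nhds (3 - 0)) :=
    tendsto_const_nhds.sub hr
  have h := hnum.div hden (by norm_num)
  norm_num at h
  exact h

/-- For the doubling block construction, `liminf N_k/k = 1/3` and `limsup N_k/k = 2/3`. -/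
theorem liminf_limsup_block_frequencies :
    liminf (fun k : ℕ => (NSeq k : ℝ) / k) atTop = 1 / 3 ∧
    limsup (fun k : ℕ => (NSeq k : ℝ) / k) atTop = 2 / 3 := by
  have hbdd_le : IsBoundedUnder (· ≤ ·) atTop fBF := isBoundedUnder_of ⟨1, hf1⟩
  have hbdd_ge : IsBoundedUnder (· ≥ ·) atTop fBF := isBoundedUnder_of ⟨0, hf0⟩
  have hcob_le : IsCoboundedUnder (· ≤ ·) atTop fBF := isCoboundedUnder_le_of_le _ hf0
  have hcob_ge : IsCoboundedUnder (· ≥ ·) atTop fBF := isCoboundedUnder_ge_of_le _ hf1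
  have hchg : (fun k : ℕ => (NSeq k : ℝ) / k) = fBF := rfl
  rw [hchg]
  -- liminf ≥ 1/3
  have hlim_ge : (1/3 : ℝ) ≤ liminf fBF atTop := by
    apply le_liminf_of_le hcob_ge
    filter_upwards [eventually_ge_atTop 1] with k hk
    have hb := (BlockFreq.NSeq_bounds k).1
    have hk0 : (0:ℝ) < (k:ℝ) := by exact_mod_cast hk
    have hcast : (k:ℝ) ≤ 3 * (NSeq k : ℝ) := by exact_mod_cast hb
    unfold fBF
    rw [le_div_iff₀ hk0]
    linarith
  -- liminf ≤ 1/3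
  have hlim_le : liminf fBF atTop ≤ 1/3 := by
    apply le_of_forall_pos_le_add
    intro ε hε
    apply liminf_le_of_frequently_le _ hbdd_ge
    have hev : ∀ᶠ m in atTop, fBF (3 * 4 ^ (m + 1) - 1) < 1/3 + ε :=
      htends2.eventually_lt_const (by linarith)
    rw [eventually_atTop] at hev
    obtain ⟨M, hM⟩ := hev
    rw [frequently_atTop]
    intro n
    refine ⟨3 * 4 ^ (max n M + 1) - 1, ?_, ?_⟩
    · have h4 := BlockFreq.four_pow_ge (max n M + 1)
      have := le_max_left n M
      omega
    · exact le_of_lt (hM (max n M) (le_max_right n M))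
  -- limsup ≥ 2/3
  have hsup_ge : (2/3 : ℝ) ≤ limsup fBF atTop := by
    apply le_limsup_of_frequently_le _ hbdd_le
    rw [frequently_atTop]
    intro n
    refine ⟨6 * 4 ^ n - 1, ?_, ?_⟩
    · have h4 := BlockFreq.four_pow_ge n
      omega
    · rw [hval1 n]
      have hc1 : (1:ℝ) ≤ (4:ℝ) ^ n := one_le_pow₀ (by norm_num)
      rw [le_div_iff₀ (by linarith)]
      linarith
  -- limsup ≤ 2/3
  have hsup_le : limsup fBF atTop ≤ 2/3 := by
    apply le_of_forall_pos_le_add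
    intro ε hε
    apply limsup_le_of_le hcob_le
    obtain ⟨K, hK⟩ := exists_nat_gt (5 / (3 * ε))
    filter_upwards [eventually_ge_atTop (max K 1)] with k hk
    have hk1 : 1 ≤ k := le_trans (le_max_right _ _) hk
    have hkK : K ≤ k := le_trans (le_max_left _ _) hk
    have hb := (BlockFreq.NSeq_bounds k).2
    have hk0 : (0:ℝ) < (k:ℝ) := by exact_mod_cast hk1
    have hcast : 3 * (NSeq k : ℝ) ≤ 2 * (k:ℝ) + 5 := by exact_mod_cast hb
    have hKk : (5:ℝ) / (3 * ε) < (k:ℝ) := lt_of_lt_of_le hK (by exact_mod_cast hkK)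
    have h5 : (5:ℝ) < 3 * ε * (k:ℝ) := by
      rw [div_lt_iff₀ (by positivity)] at hKk
      linarith
    unfold fBF
    rw [div_le_iff₀ hk0]
    linarith
  exact ⟨le_antisymm hlim_le hlim_ge, le_antisymm hsup_le hsup_ge⟩

end MainProof
end

section
/- Let F be the substitution on {a,b}* with F(a) = ab, F(b) = a, and ω = lim_n F^n(a) the Fibonacci word. If |ω_n|_a denotes the number of a's among the first n letters of ω, then lim_{n→∞} |ω_n|_a / n = η, where η is the positive root of η² + η = 1 (i.e. η = (√5 - 1)/2). -/
open Filter

/-- Iterates of the Fibonacci substitution `a ↦ ab`, `b ↦ a` starting from `a`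
(`true` encodes the letter `a`, `false` encodes `b`). -/
def fibIter : ℕ → List Bool
  | 0 => [true]
  | n + 1 => (fibIter n).flatMap (fun c => if c then [true, false] else [true])

/-- The infinite Fibonacci word `ω` (each `fibIter n` is a prefix of the next, and
`fibIter (i+1)` has length `> i`). -/
def fibWord (i : ℕ) : Bool := (fibIter (i + 1)).getD i false

/-- Number of occurrences of the letter `a` among the first `n` letters of `ω`. -/
def fibCountA (n : ℕ) : ℕ := ((Finset.range n).filter (fun i => fibWord i = true)).card

namespace FibAux

def sigma (w : List Bool) : List Bool :=
  w.flatMap (fun c => if c then [true, false] else [true])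

lemma sigma_append (u v : List Bool) : sigma (u ++ v) = sigma u ++ sigma v := by
  simp [sigma]

lemma count_sigma (w : List Bool) : (sigma w).count true = w.length := by
  induction w with
  | nil => simp [sigma]
  | cons c t ih =>
    have : sigma (c :: t) = (if c then [true, false] else [true]) ++ sigma t := rfl
    rw [this, List.count_append, ih]
    cases c <;> simp [List.count_cons] <;> omega

lemma length_sigma (w : List Bool) : (sigma w).length = w.length + w.count true := by
  induction w with
  | nil => simp [sigma]
  | cons c t ih =>
    have : sigma (c :: t) = (if c then [true, false] else [true]) ++ sigma t := rfl
    rw [this, List.length_append, ih]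
    cases c <;> simp [List.count_cons] <;> omega

lemma decomp (w : List Bool) :
    ∀ n ≤ (sigma w).length, ∃ m ≤ w.length, ∃ r ≤ 1,
      n = m + (w.take m).count true + r ∧
      ((sigma w).take n).count true = m + r := by
  induction w using List.reverseRecOn with
  | nil =>
    intro n hn
    simp [sigma] at hn
    subst hn
    exact ⟨0, by simp, 0, by simp, by simp, by simp⟩
  | append_singleton ys y ih =>
    intro n hn
    rw [sigma_append] at hn ⊢
    by_cases h : n ≤ (sigma ys).length
    · obtain ⟨m, hm, r, hr, h1, h2⟩ := ih n h
      refine ⟨m, by simp; omega, r, hr, ?_, ?_⟩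
      · rwa [List.take_append_of_le_length hm]
      · rwa [List.take_append_of_le_length h]
    · push_neg at h
      have hys := count_sigma ys
      have hls := length_sigma ys
      have htake : ∀ k, (sigma ys ++ sigma [y]).take ((sigma ys).length + k)
          = sigma ys ++ (sigma [y]).take k := by
        intro k
        rw [List.take_append, List.take_of_length_le (by omega),
          Nat.add_sub_cancel_left]
      cases y with
      | false =>
        have hlen : (sigma [false] : List Bool).length = 1 := rfl
        rw [List.length_append, hlen] at hn
        have hn' : n = (sigma ys).length + 1 := by omega
        refine ⟨ys.length + 1, by simp, 0, by norm_num, ?_, ?_⟩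
        · rw [show ys.length + 1 = (ys ++ [false]).length by simp,
            List.take_length, List.count_append]
          simp [hn', hls]; omega
        · rw [hn', htake 1]
          show (sigma ys ++ [true]).count true = _
          rw [List.count_append, hys]
          simp
      | true =>
        have hlen : (sigma [true] : List Bool).length = 2 := rfl
        rw [List.length_append, hlen] at hn
        rcases Nat.lt_or_ge n ((sigma ys).length + 2) with hc | hc
        · -- n = len + 1, r = 1, m = ys.length
          have hn' : n = (sigma ys).length + 1 := by omega
          refine ⟨ys.length, by simp, 1, le_refl _, ?_, ?_⟩
          · rw [List.take_append_of_le_length (le_refl _), List.take_length]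
            omega
          · rw [hn', htake 1]
            show (sigma ys ++ [true]).count true = _
            rw [List.count_append, hys]; simp
        · -- n = len + 2, full word, m = (ys++[true]).length, r = 0
          have hn' : n = (sigma ys).length + 2 := by omega
          refine ⟨ys.length + 1, by simp, 0, by norm_num, ?_, ?_⟩
          · rw [show ys.length + 1 = (ys ++ [true]).length by simp,
              List.take_length, List.count_append]
            simp [hn', hls, List.count_cons]
            omega
          · rw [hn', htake 2]
            show (sigma ys ++ [true, false]).count true = _
            rw [List.count_append, hys]; simp

lemma fibIter_succ (k : ℕ) : fibIter (k + 1) = sigma (fibIter k) := rfl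

lemma count_fibIter_pos (k : ℕ) : 0 < (fibIter k).count true := by
  cases k with
  | zero => simp [fibIter]
  | succ m => rw [fibIter_succ, count_sigma]; induction m with
    | zero => simp [fibIter]
    | succ i ih => rw [fibIter_succ, length_sigma]; omega

lemma length_fibIter_lt (k : ℕ) : k < (fibIter k).length := by
  induction k with
  | zero => simp [fibIter]
  | succ m ih =>
    rw [fibIter_succ, length_sigma]
    have := count_fibIter_pos m
    omega

lemma sigma_prefix {u v : List Bool} (h : u <+: v) : sigma u <+: sigma v := by
  obtain ⟨t, rfl⟩ := h
  exact ⟨sigma t, (sigma_append u t).symm⟩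

lemma fibIter_prefix (k : ℕ) : fibIter k <+: fibIter (k + 1) := by
  induction k with
  | zero => exact ⟨[false], rfl⟩
  | succ m ih => exact sigma_prefix ih

lemma fibIter_prefix_le {k l : ℕ} (h : k ≤ l) : fibIter k <+: fibIter l := by
  induction l with
  | zero => rw [Nat.le_zero.mp h]
  | succ m ih =>
    rcases Nat.lt_or_ge k (m + 1) with hc | hc
    · exact (ih (by omega)).trans (fibIter_prefix m)
    · rw [Nat.le_antisymm h hc]

lemma fibWord_eq (k i : ℕ) (hi : i < (fibIter k).length) :
    fibWord i = (fibIter k).getD i false := by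
  unfold fibWord
  rcases Nat.le_total (i + 1) k with h | h
  · obtain ⟨t, ht⟩ := fibIter_prefix_le h
    rw [← ht, List.getD_append]
    calc i < (fibIter i).length := length_fibIter_lt i
      _ ≤ (fibIter (i + 1)).length := (fibIter_prefix i).length_le
  · obtain ⟨t, ht⟩ := fibIter_prefix_le h
    rw [← ht, List.getD_append _ _ _ _ hi]

lemma fibCountA_eq (k n : ℕ) (hn : n ≤ (fibIter k).length) :
    fibCountA n = ((fibIter k).take n).count true := by
  induction n with
  | zero => simp [fibCountA]
  | succ m ih =>
    have hm : m < (fibIter k).length := by omega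
    have h1 : fibCountA (m + 1) = fibCountA m + (if fibWord m = true then 1 else 0) := by
      unfold fibCountA
      rw [Finset.range_add_one, Finset.filter_insert]
      split <;> simp [Finset.card_insert_of_notMem, Finset.notMem_range_self]
    rw [h1, ih (by omega), List.take_succ, List.count_append, fibWord_eq k m hm]
    rw [List.getD_eq_getElem _ _ hm, List.getElem?_eq_getElem hm]
    cases h : (fibIter k)[m] <;> simp

lemma discrepancy (η : ℝ) (hη : 0 < η) (hroot : η ^ 2 + η = 1) :
    ∀ k, ∀ n ≤ (fibIter k).length,
      |(((fibIter k).take n).count true : ℝ) - η * n| ≤ 1 := by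
  have hη1 : η < 1 := by nlinarith
  intro k
  induction k with
  | zero =>
    intro n hn
    simp [fibIter] at hn
    interval_cases n
    · simp
    · rw [show List.take 1 (fibIter 0) = [true] from rfl]
      norm_num [abs_le]
      constructor <;> nlinarith
  | succ m ih =>
    intro n hn
    rw [fibIter_succ] at hn ⊢
    obtain ⟨p, hp, r, hr, h1, h2⟩ := decomp (fibIter m) n hn
    have hIH := ih p hp
    rw [h2, h1, abs_le] at *
    obtain ⟨hl, hu⟩ := hIH
    push_cast
    have hr' : (r : ℝ) ≤ 1 := by exact_mod_cast hr
    have hr0 : (0 : ℝ) ≤ r := by positivity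
    constructor <;> nlinarith

end FibAux

/-- The frequency of the letter `a` in the Fibonacci word is the positive root `η`
of `η² + η = 1`. -/
theorem fibWord_freq_a (η : ℝ) (hη : 0 < η) (hroot : η ^ 2 + η = 1) :
    Tendsto (fun n : ℕ => (fibCountA n : ℝ) / n) atTop (nhds η) := by
  rw [← tendsto_sub_nhds_zero_iff]
  refine squeeze_zero_norm' (a := fun n : ℕ => 1 / (n : ℝ)) ?_ tendsto_one_div_atTop_nhds_zero_nat
  · filter_upwards [eventually_ge_atTop 1] with n hn
    have hnR : (0 : ℝ) < n := by exact_mod_cast hn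
    have hle : n ≤ (fibIter n).length := le_of_lt (FibAux.length_fibIter_lt n)
    have hd := FibAux.discrepancy η hη hroot n n hle
    rw [← FibAux.fibCountA_eq n n hle] at hd
    rw [Real.norm_eq_abs]
    have : (fibCountA n : ℝ) / n - η = ((fibCountA n : ℝ) - η * n) / n := by
      field_simp
    rw [this, abs_div, abs_of_pos hnR, div_le_div_iff₀ hnR hnR]
    calc |(fibCountA n : ℝ) - η * n| * n ≤ 1 * n := by
          apply mul_le_mul_of_nonneg_right hd (le_of_lt hnR)
      _ = 1 * n := rfl
end

section
/- Let ν be a finite Borel measure on ℝⁿ, E bounded, α, t, ε > 0. Suppose every x ∈ E has a radius r_x ∈ (0, δ) with ν(B(x,r_x)) > r_x^α and r_x > δ/λ for a uniform λ ≥ 2. Then the covering number satisfies N_δ(E)(2δ)^{α+ε} ≤ (2λ)^α ξ_n M_{ν,δ}^1(E)(2δ)^ε, where ξ_n is the Besicovitch constant of ℝⁿ and M_{ν,δ}^1(E) = sup{Σᵢ ν(B(xᵢ,δ)) : disjoint balls of radius δ centered in E}. -/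
open Metric Filter Set MeasureTheory

variable {n : ℕ}

/-- The covering number `N_δ(E)`: least cardinality of a finite set of centers in `E`
whose open balls of radius `δ` cover `E`. -/
noncomputable def coveringNumber (E : Set (EuclideanSpace ℝ (Fin n))) (δ : ℝ) : ℕ :=
  sInf {m : ℕ | ∃ S : Finset (EuclideanSpace ℝ (Fin n)),
    ↑S ⊆ E ∧ S.card = m ∧ E ⊆ ⋃ x ∈ S, ball x δ}

/-- `M_{ν,δ}^1(E)`: supremum of `∑ᵢ ν(B(xᵢ,δ))` over finite families of pairwise disjoint
open balls of radius `δ` centered in `E`. -/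
noncomputable def packingMassSum (ν : Measure (EuclideanSpace ℝ (Fin n))) (δ : ℝ)
    (E : Set (EuclideanSpace ℝ (Fin n))) : ℝ :=
  sSup {s : ℝ | ∃ S : Finset (EuclideanSpace ℝ (Fin n)),
    ↑S ⊆ E ∧ (S : Set (EuclideanSpace ℝ (Fin n))).PairwiseDisjoint (fun x => ball x δ) ∧
    s = ∑ x ∈ S, (ν (ball x δ)).toReal}

/-- Key counting estimate: if every point of `E` has mass `ν(B(x,r_x)) > r_x^α` at a scale
`r_x ∈ (δ/λ, δ)`, then `N_δ(E)(2δ)^{α+ε} ≤ (2λ)^α ξ M_{ν,δ}^1(E)(2δ)^ε`, where `ξ` is a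
Besicovitch constant for `ℝⁿ`. -/
theorem covering_bound_by_packing_mass
    (ν : Measure (EuclideanSpace ℝ (Fin n))) [IsFiniteMeasure ν]
    (E : Set (EuclideanSpace ℝ (Fin n))) (hE : Bornology.IsBounded E)
    (δ lam α ε : ℝ) (hδ : 0 < δ) (hlam : 2 ≤ lam) (hα : 0 < α) (hε : 0 < ε)
    (hmass : ∀ x ∈ E, ∃ r : ℝ, δ / lam < r ∧ r < δ ∧ (r : ℝ) ^ α < (ν (ball x r)).toReal)
    (ξ : ℕ)
    (hξ : ∀ C : Set (EuclideanSpace ℝ (Fin n)), C ⊆ E → E ⊆ ⋃ x ∈ C, ball x δ →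
      ∃ D : Fin ξ → Set (EuclideanSpace ℝ (Fin n)),
        (∀ i, D i ⊆ C) ∧
        (∀ i, (D i).PairwiseDisjoint (fun x => ball x δ)) ∧
        E ⊆ ⋃ i, ⋃ x ∈ D i, ball x δ) :
    (coveringNumber E δ : ℝ) * (2 * δ) ^ (α + ε) ≤
      (2 * lam) ^ α * ξ * packingMassSum ν δ E * (2 * δ) ^ ε := by
  classical
  have hlam0 : (0:ℝ) < lam := lt_of_lt_of_le two_pos hlam
  have hq0 : (0:ℝ) < δ / lam := div_pos hδ hlam0
  -- boundedness of the packing sums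
  have hbdd : BddAbove {s : ℝ | ∃ S : Finset (EuclideanSpace ℝ (Fin n)),
      ↑S ⊆ E ∧ (S : Set (EuclideanSpace ℝ (Fin n))).PairwiseDisjoint (fun x => ball x δ) ∧
      s = ∑ x ∈ S, (ν (ball x δ)).toReal} := by
    refine ⟨(ν univ).toReal, ?_⟩
    rintro s ⟨S, hSE, hSd, rfl⟩
    have h1 : ∑ x ∈ S, (ν (ball x δ)).toReal = (∑ x ∈ S, ν (ball x δ)).toReal := by
      rw [ENNReal.toReal_sum]
      intro a _; exact (measure_lt_top ν _).ne
    rw [h1]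
    have h2 : ∑ x ∈ S, ν (ball x δ) = ν (⋃ x ∈ S, ball x δ) := by
      rw [measure_biUnion_finset hSd (fun x _ => measurableSet_ball)]
    rw [h2]
    exact ENNReal.toReal_mono (measure_ne_top ν _) (measure_mono (subset_univ _))
  have hM0 : 0 ≤ packingMassSum ν δ E := by
    apply le_csSup hbdd
    exact ⟨∅, by simp, by simp, by simp⟩
  -- each ball B(x, δ), x ∈ E, has mass ≥ (δ/lam)^α
  have hball : ∀ x ∈ E, (δ / lam) ^ α ≤ (ν (ball x δ)).toReal := by
    intro x hx
    obtain ⟨r, hr1, hr2, hr3⟩ := hmass x hx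
    calc (δ / lam) ^ α ≤ r ^ α :=
          Real.rpow_le_rpow hq0.le hr1.le hα.le
      _ ≤ (ν (ball x r)).toReal := hr3.le
      _ ≤ (ν (ball x δ)).toReal :=
          ENNReal.toReal_mono (measure_ne_top ν _)
            (measure_mono (ball_subset_ball hr2.le))
  -- obtain a finite cover with centers in E
  obtain ⟨T, hTE, hTfin, hTcov⟩ := (totallyBounded_iff_subset.mp
    ((hE.isCompact_closure.totallyBounded).subset subset_closure))
    {p | dist p.1 p.2 < δ} (Metric.dist_mem_uniformity hδ)
  have hTcov' : E ⊆ ⋃ x ∈ T, ball x δ := by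
    intro y hy
    obtain ⟨x, hx, hxy⟩ := mem_iUnion₂.mp (hTcov hy)
    exact mem_iUnion₂.mpr ⟨x, hx, by exact hxy⟩
  obtain ⟨D, hDT, hDdisj, hDcov⟩ := hξ T hTE hTcov'
  have hDfin : ∀ i, (D i).Finite := fun i => hTfin.subset (hDT i)
  -- Finset versions
  let F : Fin ξ → Finset (EuclideanSpace ℝ (Fin n)) := fun i => (hDfin i).toFinset
  have hFD : ∀ i, (F i : Set (EuclideanSpace ℝ (Fin n))) = D i := fun i =>
    (hDfin i).coe_toFinset
  let U : Finset (EuclideanSpace ℝ (Fin n)) := Finset.univ.biUnion F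
  have hUE : (U : Set (EuclideanSpace ℝ (Fin n))) ⊆ E := by
    intro x hx
    obtain ⟨i, _, hi⟩ := Finset.mem_biUnion.mp hx
    exact hTE (hDT i ((hFD i) ▸ hi))
  have hUcov : E ⊆ ⋃ x ∈ U, ball x δ := by
    intro y hy
    obtain ⟨i, hi⟩ := mem_iUnion.mp (hDcov hy)
    obtain ⟨x, hx, hxy⟩ := mem_iUnion₂.mp hi
    refine mem_iUnion₂.mpr ⟨x, ?_, hxy⟩
    exact Finset.mem_biUnion.mpr ⟨i, Finset.mem_univ i, by rw [← Finset.mem_coe, hFD i]; exact hx⟩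
  -- covering number bound
  have hN : coveringNumber E δ ≤ U.card := Nat.sInf_le ⟨U, hUE, rfl, hUcov⟩
  -- per-family bound
  have hFi : ∀ i, (F i).card * (δ / lam) ^ α ≤ packingMassSum ν δ E := by
    intro i
    have hsum : ∑ x ∈ F i, (ν (ball x δ)).toReal ≤ packingMassSum ν δ E := by
      apply le_csSup hbdd
      refine ⟨F i, ?_, (hFD i).symm ▸ hDdisj i, rfl⟩
      intro x hx; exact hTE (hDT i ((hFD i) ▸ hx))
    refine le_trans ?_ hsum
    have : ∀ x ∈ F i, (δ / lam) ^ α ≤ (ν (ball x δ)).toReal := by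
      intro x hx; exact hball x (hTE (hDT i ((hFD i) ▸ hx)))
    calc ((F i).card : ℝ) * (δ / lam) ^ α = ∑ _x ∈ F i, (δ / lam) ^ α := by
          rw [Finset.sum_const, nsmul_eq_mul]
      _ ≤ _ := Finset.sum_le_sum this
  -- key numeric bound
  have hkey : (coveringNumber E δ : ℝ) * (δ / lam) ^ α ≤ ξ * packingMassSum ν δ E := by
    calc (coveringNumber E δ : ℝ) * (δ / lam) ^ α
        ≤ (U.card : ℝ) * (δ / lam) ^ α := by
          apply mul_le_mul_of_nonneg_right (Nat.cast_le.mpr hN)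
            (Real.rpow_nonneg hq0.le α)
      _ ≤ (∑ i : Fin ξ, ((F i).card : ℝ)) * (δ / lam) ^ α := by
          apply mul_le_mul_of_nonneg_right _ (Real.rpow_nonneg hq0.le α)
          rw [← Nat.cast_sum]
          exact_mod_cast Finset.card_biUnion_le
      _ = ∑ i : Fin ξ, ((F i).card : ℝ) * (δ / lam) ^ α := by
          rw [Finset.sum_mul]
      _ ≤ ∑ _i : Fin ξ, packingMassSum ν δ E := Finset.sum_le_sum fun i _ => hFi i
      _ = ξ * packingMassSum ν δ E := by
          rw [Finset.sum_const, nsmul_eq_mul, Finset.card_univ, Fintype.card_fin]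
  -- algebra
  have h2δ : (0:ℝ) < 2 * δ := by linarith
  have hsplit : (2 * δ) ^ (α + ε) = (2 * δ) ^ α * (2 * δ) ^ ε :=
    Real.rpow_add h2δ α ε
  have hfactor : (2 * δ : ℝ) ^ α = (δ / lam) ^ α * (2 * lam) ^ α := by
    rw [← Real.mul_rpow hq0.le (by positivity)]
    congr 1
    field_simp
  rw [hsplit]
  have hε0 : (0:ℝ) ≤ (2 * δ) ^ ε := Real.rpow_nonneg h2δ.le ε
  have : (coveringNumber E δ : ℝ) * ((δ / lam) ^ α * (2 * lam) ^ α)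
      ≤ (2 * lam) ^ α * ξ * packingMassSum ν δ E := by
    have h2l : (0:ℝ) ≤ (2 * lam) ^ α := Real.rpow_nonneg (by positivity) α
    calc (coveringNumber E δ : ℝ) * ((δ / lam) ^ α * (2 * lam) ^ α)
        = ((coveringNumber E δ : ℝ) * (δ / lam) ^ α) * (2 * lam) ^ α := by ring
      _ ≤ (↑ξ * packingMassSum ν δ E) * (2 * lam) ^ α :=
          mul_le_mul_of_nonneg_right hkey h2l
      _ = (2 * lam) ^ α * ξ * packingMassSum ν δ E := by ring
  calc (coveringNumber E δ : ℝ) * ((2 * δ) ^ α * (2 * δ) ^ ε)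
      = ((coveringNumber E δ : ℝ) * (2 * δ) ^ α) * (2 * δ) ^ ε := by ring
    _ ≤ ((2 * lam) ^ α * ξ * packingMassSum ν δ E) * (2 * δ) ^ ε := by
        apply mul_le_mul_of_nonneg_right _ hε0
        rw [hfactor]; exact this
    _ = (2 * lam) ^ α * ξ * packingMassSum ν δ E * (2 * δ) ^ ε := by ring
end
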